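/- arXiv:hep-th/9807144 — 3 statements merged into one kernel-verified Lean document; each statement's English description precedes it below -/
import Mathlib

section
/- If e^{ia} = -1 and e^{ib} ≠ -1, then J(a,b) = (-1)^m (m-1) · e^{ibm}/(1+e^{ib}) + (e^{ib} + (-1)^m e^{ibm})/(1+e^{ib})². -/
open Complex Finset

/-- The modular S-matrix of the N=2 superconformal algebra at level `m`. -/
noncomputable def Smat (m : ℕ) (u v : ℝ × ℝ) : ℂ :=
  (2 / (m : ℂ)) * Complex.exp (Real.pi * Complex.I * (((u.1 - u.2) * (v.1 - v.2) / m : ℝ) : ℂ)) *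
    Complex.sin (((Real.pi * (u.1 + u.2) * (v.1 + v.2) / m : ℝ) : ℂ))

/-- The Neveu-Schwarz index set `NS^(m)`:
pairs of half-odd-integers `(j,k)` with `0 < j`, `0 < k`, `j + k < m`. -/
noncomputable def NSfin (m : ℕ) : Finset (ℝ × ℝ) :=
  ((Finset.range m ×ˢ Finset.range m).filter fun p => p.1 + p.2 + 1 < m).image
    fun p => ((p.1 : ℝ) + 1 / 2, (p.2 : ℝ) + 1 / 2)

/-- The Ramond index set `R^(m)`:
integer pairs `(j,k)` with `0 < j`, `0 < j + k < m`, `0 ≤ k < m`. -/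
noncomputable def Rfin (m : ℕ) : Finset (ℝ × ℝ) :=
  ((Finset.range m ×ˢ Finset.range m).filter fun p => 1 ≤ p.1 ∧ p.1 + p.2 < m).image
    fun p => ((p.1 : ℝ), (p.2 : ℝ))

/-- The full index set `A^(m) = NS^(m) ∪ R^(m)`. -/
noncomputable def Afin (m : ℕ) : Finset (ℝ × ℝ) := NSfin m ∪ Rfin m

/-- The conjugation `(j,k)* = (k,j)` if `k ≠ 0`, `(m-j, 0)` if `k = 0`. -/
noncomputable def conjA (m : ℕ) (u : ℝ × ℝ) : ℝ × ℝ :=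
  if u.2 = 0 then ((m : ℝ) - u.1, 0) else (u.2, u.1)

/-- `J(a,b) = ∑ e^{iaj} e^{ibk}` over integer pairs `(j,k)` with
`0 < k < m`, `-k < j < k` and `j + k` odd. -/
noncomputable def Jsum (m : ℕ) (a b : ℂ) : ℂ :=
  ∑ k ∈ Finset.Ioo (0 : ℤ) (m : ℤ),
    ∑ j ∈ (Finset.Ioo (-k) k).filter fun j => Odd (j + k),
      Complex.exp (Complex.I * a * j) * Complex.exp (Complex.I * b * k)

/-- `I(a,b) = J(a,b) + J(a,-b)`. -/
noncomputable def Isum (m : ℕ) (a b : ℂ) : ℂ := Jsum m a b + Jsum m a (-b)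

/-- The fusion coefficient `N_{u,u',u''}` given by the modified Verlinde formula. -/
noncomputable def Nfus (m : ℕ) (u u' u'' : ℝ × ℝ) : ℂ :=
  ∑ v ∈ NSfin m,
    Smat m u v * Smat m u' v * Smat m u'' v / Smat m (1 / 2, 1 / 2) v

/-- The fusion coefficient `N_{u,u'}^{u''}` (with conjugated third entry). -/
noncomputable def Ncof (m : ℕ) (u u' w : ℝ × ℝ) : ℂ :=
  ∑ v ∈ NSfin m,
    Smat m u v * Smat m u' v * (starRingEnd ℂ) (Smat m w v) / Smat m (1 / 2, 1 / 2) v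

/-- Membership in `𝔽^(m)`: an odd number of the three indices is of Neveu-Schwarz type. -/
def Fmem (m : ℕ) (u u' u'' : ℝ × ℝ) : Prop :=
  (u ∈ NSfin m ∧ u' ∈ NSfin m ∧ u'' ∈ NSfin m) ∨
  (u ∈ NSfin m ∧ u' ∈ Rfin m ∧ u'' ∈ Rfin m) ∨
  (u ∈ Rfin m ∧ u' ∈ NSfin m ∧ u'' ∈ Rfin m) ∨
  (u ∈ Rfin m ∧ u' ∈ Rfin m ∧ u'' ∈ NSfin m)

/-! For fixed `k` the `k` admissible `j` all have parity opposite to `k`, so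
`e^{iaj} = (-1)^j = -(-1)^k` and the inner sum is `-k (-e^{ib})^k`. Hence `J(a,b) = -∑_{k<m} k w^k`
with `w = -e^{ib}`, and the arithmetico-geometric identity
`(1 - w)^2 ∑_{k<m} k w^k = w - m w^m + (m - 1) w^{m+1}` gives the closed form, as
`1 - w = 1 + e^{ib} ≠ 0`. -/

theorem one_sub_sq_mul_sum_range_natCast_mul_pow {R : Type*} [CommRing R] (w : R) (m : ℕ) :
    (1 - w) ^ 2 * ∑ k ∈ range m, (k : R) * w ^ k = w - m * w ^ m + (m - 1) * w ^ (m + 1) := by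
  induction m with
  | zero => simp
  | succ n ih =>
    rw [sum_range_succ, mul_add, ih]
    push_cast
    ring

theorem sum_Ioo_zero_natCast_eq_sum_range {M : Type*} [AddCommMonoid M] (f : ℤ → M)
    (hf : f 0 = 0) (m : ℕ) : ∑ k ∈ Ioo (0 : ℤ) m, f k = ∑ n ∈ range m, f n := by
  have hIco : Ico (0 : ℤ) m = (range m).map Nat.castEmbedding := by
    ext k
    simp only [mem_Ico, mem_map, mem_range, Nat.castEmbedding_apply]
    constructor
    · exact fun hk => ⟨k.toNat, by omega, by omega⟩
    · rintro ⟨n, hn, rfl⟩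
      omega
  rw [sum_subset Ioo_subset_Ico_self, hIco, sum_map]
  · rfl
  · intro k hk hk'
    obtain rfl : k = 0 := by simp only [mem_Ico, mem_Ioo] at hk hk'; omega
    exact hf

theorem Int.card_filter_odd_add_Ioo_neg {k : ℤ} (hk : 0 ≤ k) :
    (#{j ∈ Ioo (-k) k | Odd (j + k)} : ℤ) = k := by
  have himage : {j ∈ Ioo (-k) k | Odd (j + k)} =
      (Finset.range k.toNat).image (fun i : ℕ => k - 1 - 2 * i) := by
    ext j
    simp only [mem_filter, mem_Ioo, mem_image, mem_range, Int.odd_iff]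
    constructor
    · rintro ⟨⟨h1, h2⟩, h3⟩
      exact ⟨((k - 1 - j) / 2).toNat, by omega, by omega⟩
    · rintro ⟨i, hi, rfl⟩
      omega
  rw [himage, card_image_of_injective _ (fun i i' h => by omega), card_range]
  omega

theorem neg_one_zpow_of_odd_add {R : Type*} [DivisionMonoid R] [HasDistribNeg R] {j k : ℤ}
    (h : Odd (j + k)) : (-1 : R) ^ j = -(-1) ^ k := by
  rcases Int.even_or_odd k with hk | hk
  · rw [((Int.odd_add.mp h).mpr hk).neg_one_zpow, hk.neg_one_zpow]
  · rw [((Int.odd_add'.mp h).mp hk).neg_one_zpow, hk.neg_one_zpow, neg_neg]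

theorem sum_filter_odd_add_exp_mul_exp {a : ℂ} (ha : exp (I * a) = -1) (b : ℂ) {k : ℤ}
    (hk : 0 ≤ k) :
    ∑ j ∈ Ioo (-k) k with Odd (j + k), exp (I * a * j) * exp (I * b * k)
      = -(k * ((-1) ^ k * exp (I * b * k))) := by
  have hterm : ∀ j ∈ {j ∈ Ioo (-k) k | Odd (j + k)},
      exp (I * a * j) * exp (I * b * k) = -((-1) ^ k * exp (I * b * k)) := by
    intro j hj
    rw [mul_comm (I * a), exp_int_mul, ha, neg_one_zpow_of_odd_add (mem_filter.mp hj).2, neg_mul]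
  rw [sum_congr rfl hterm, sum_const, nsmul_eq_mul, ← Int.cast_natCast,
    Int.card_filter_odd_add_Ioo_neg hk, mul_neg]

theorem Jsum_eq_neg_sum_range (m : ℕ) {a : ℂ} (ha : exp (I * a) = -1) (b : ℂ) :
    Jsum m a b = -∑ n ∈ range m, (n : ℂ) * (-exp (I * b)) ^ n := by
  rw [Jsum, sum_congr rfl fun k hk => sum_filter_odd_add_exp_mul_exp ha b (mem_Ioo.mp hk).1.le,
    sum_Ioo_zero_natCast_eq_sum_range _ (by simp), ← sum_neg_distrib]
  refine sum_congr rfl fun n _ => ?_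
  rw [zpow_natCast, Int.cast_natCast, mul_comm (I * b), exp_nat_mul, neg_pow (exp (I * b))]

theorem Jsum_negone_ne_negone_general (m : ℕ) (a b : ℂ)
    (ha : Complex.exp (Complex.I * a) = -1) (hb : Complex.exp (Complex.I * b) ≠ -1) :
    Jsum m a b
      = (-1) ^ m * (m - 1) * Complex.exp (Complex.I * b * m) / (1 + Complex.exp (Complex.I * b)) +
        (Complex.exp (Complex.I * b) + (-1) ^ m * Complex.exp (Complex.I * b * m)) /
          (1 + Complex.exp (Complex.I * b)) ^ 2 := by
  set z := exp (I * b)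
  have hz : 1 + z ≠ 0 := fun h => hb (by linear_combination h)
  have hzm : exp (I * b * m) = z ^ m := by rw [mul_comm (I * b), exp_nat_mul]
  have hS := one_sub_sq_mul_sum_range_natCast_mul_pow (-z) m
  rw [Jsum_eq_neg_sum_range m ha b, hzm]
  rw [neg_pow, pow_succ, neg_pow] at hS
  field_simp
  linear_combination (-1) * hS

theorem Jsum_negone_ne_negone (m : ℕ) (hm : 0 < m) (a b : ℂ)
    (ha : Complex.exp (Complex.I * a) = -1) (hb : Complex.exp (Complex.I * b) ≠ -1) :
    Jsum m a b
      = (-1) ^ m * (m - 1) * Complex.exp (Complex.I * b * m) / (1 + Complex.exp (Complex.I * b)) +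
        (Complex.exp (Complex.I * b) + (-1) ^ m * Complex.exp (Complex.I * b * m)) /
          (1 + Complex.exp (Complex.I * b)) ^ 2 :=
  Jsum_negone_ne_negone_general m a b ha hb
end

section
/- Let a, b ∈ (π/m)ℤ with e^{ia} = 1 and e^{ib} ≠ 1. Then I(a,b) = -m if e^{ibm} = 1, and I(a,b) = m - 1 + ((1+e^{ib})/(1-e^{ib}))² if e^{ibm} = -1. -/
open Complex Finset

/-
Since `e^{ia} = 1`, each summand of `J(a, c)` depends only on `k`, and exactly `k` of the `j`
with `-k < j < k` have `j + k` odd; hence `J(a, c) = W(e^{ic})` with `W(z) = ∑_{k < m} k z^k`.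
The weighted geometric sum satisfies `(1 - z) W(z) = ∑_{k < m} z^k - 1 + (1 - m) z^m`, and with
`z = e^{ib}` and `z^m = ±1` the geometric sum is `0` or `2 / (1 - z)`. Adding the resulting closed
forms of `W(z)` and `W(z⁻¹)` gives `I(a, b)`.
-/

theorem card_filter_odd_add_Ioo_neg_self (k : ℤ) :
    #{j ∈ Ioo (-k) k | Odd (j + k)} = k.toNat := by
  have h : {j ∈ Ioo (-k) k | Odd (j + k)} =
      (range k.toNat).image (fun t : ℕ => 2 * (t : ℤ) + 1 - k) := by
    ext j
    simp only [mem_filter, mem_Ioo, mem_image, mem_range, Int.odd_iff]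
    constructor
    · rintro ⟨⟨h1, h2⟩, h3⟩
      exact ⟨((j + k - 1) / 2).toNat, by omega, by omega⟩
    · rintro ⟨t, ht, rfl⟩
      omega
  rw [h, card_image_of_injective _ (fun x y h => by omega), card_range]

theorem sum_Ioo_zero_natCast {M : Type*} [AddCommMonoid M] (f : ℤ → M) (h0 : f 0 = 0)
    (m : ℕ) : ∑ k ∈ Ioo (0 : ℤ) m, f k = ∑ n ∈ range m, f n := by
  rw [← sum_image (f := f) (fun x _ y _ h => Nat.cast_injective h)]
  refine sum_subset (fun k hk => ?_) (fun k hk hk' => ?_)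
  · rw [mem_Ioo] at hk
    exact mem_image.mpr ⟨k.toNat, mem_range.mpr (by omega), by omega⟩
  · obtain ⟨n, hn, rfl⟩ := mem_image.mp hk
    rw [mem_range] at hn
    rw [mem_Ioo] at hk'
    obtain rfl : n = 0 := by omega
    exact h0

theorem Jsum_eq_sum_range_mul_pow {a : ℂ} (ha : exp (I * a) = 1) (m : ℕ) (c : ℂ) :
    Jsum m a c = ∑ n ∈ range m, (n : ℂ) * exp (I * c) ^ n := by
  have hinner : ∀ k : ℤ, ∑ j ∈ Ioo (-k) k with Odd (j + k), exp (I * a * j) * exp (I * c * k) =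
      (k.toNat : ℂ) * exp (I * c * k) := by
    intro k
    have hj : ∀ j : ℤ, exp (I * a * j) = 1 := fun j => by
      rw [mul_comm, exp_int_mul, ha, one_zpow]
    simp only [hj, one_mul, sum_const, card_filter_odd_add_Ioo_neg_self, nsmul_eq_mul]
  simp only [Jsum, hinner]
  rw [sum_Ioo_zero_natCast _ (by simp)]
  refine sum_congr rfl fun n _ => ?_
  rw [Int.toNat_natCast, Int.cast_natCast, mul_comm (I * c), exp_nat_mul]

theorem one_sub_mul_sum_range_mul_pow {R : Type*} [CommRing R] (z : R) (m : ℕ) :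
    (1 - z) * ∑ k ∈ range m, (k : R) * z ^ k = ∑ k ∈ range m, z ^ k - 1 + (1 - m) * z ^ m := by
  induction m with
  | zero => simp
  | succ n ih =>
    rw [sum_range_succ, sum_range_succ]
    push_cast
    linear_combination ih

section WeightedGeometricSum

variable {K : Type*} [Field K]

theorem sum_range_mul_pow_of_pow_eq_one {z : K} {m : ℕ} (hz : z ≠ 1) (hzm : z ^ m = 1) :
    ∑ k ∈ range m, (k : K) * z ^ k = m / (z - 1) := by
  have h := one_sub_mul_sum_range_mul_pow z m
  rw [geom_sum_eq hz, hzm] at h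
  have hz' : z - 1 ≠ 0 := sub_ne_zero.mpr hz
  rw [eq_div_iff hz']
  linear_combination -h

theorem sum_range_mul_pow_of_pow_eq_neg_one {z : K} {m : ℕ} (hz : z ≠ 1) (hzm : z ^ m = -1) :
    ∑ k ∈ range m, (k : K) * z ^ k = (m - 2) / (1 - z) + 2 / (1 - z) ^ 2 := by
  have h := one_sub_mul_sum_range_mul_pow z m
  rw [geom_sum_eq hz, hzm] at h
  have hz' : 1 - z ≠ 0 := sub_ne_zero.mpr hz.symm
  have hz'' : z - 1 ≠ 0 := sub_ne_zero.mpr hz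
  field_simp at h ⊢
  linear_combination -h

end WeightedGeometricSum

theorem Isum_one_ne_one_general (m : ℕ) (a b : ℝ)
    (ha : Complex.exp (Complex.I * a) = 1) (hb : Complex.exp (Complex.I * b) ≠ 1) :
    (Complex.exp (Complex.I * b * m) = 1 → Isum m a b = -m) ∧
    (Complex.exp (Complex.I * b * m) = -1 →
      Isum m a b = m - 1 +
        ((1 + Complex.exp (Complex.I * b)) / (1 - Complex.exp (Complex.I * b))) ^ 2) := by
  set z := exp (I * b)
  have hIsum : Isum m a b =
      ∑ k ∈ range m, (k : ℂ) * z ^ k + ∑ k ∈ range m, (k : ℂ) * z⁻¹ ^ k := by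
    rw [Isum, Jsum_eq_sum_range_mul_pow ha, Jsum_eq_sum_range_mul_pow ha, mul_neg, exp_neg]
  have hzm : exp (I * b * m) = z ^ m := by rw [mul_comm, exp_nat_mul]
  have hz0 : z ≠ 0 := exp_ne_zero _
  have hzinv : z⁻¹ ≠ 1 := inv_ne_one.mpr hb
  have hz1 : z - 1 ≠ 0 := sub_ne_zero.mpr hb
  have hz1' : 1 - z ≠ 0 := sub_ne_zero.mpr (Ne.symm hb)
  rw [hzm, hIsum]
  constructor
  · intro h
    rw [sum_range_mul_pow_of_pow_eq_one hb h,
      sum_range_mul_pow_of_pow_eq_one hzinv (by rw [inv_pow, h, inv_one])]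
    field_simp
    ring
  · intro h
    rw [sum_range_mul_pow_of_pow_eq_neg_one hb h,
      sum_range_mul_pow_of_pow_eq_neg_one hzinv (by rw [inv_pow, h, inv_neg, inv_one])]
    field_simp
    ring

theorem Isum_one_ne_one (m : ℕ) (hm : 0 < m) (a b : ℝ)
    (haZ : ∃ p : ℤ, a = Real.pi * p / m) (hbZ : ∃ q : ℤ, b = Real.pi * q / m)
    (ha : Complex.exp (Complex.I * a) = 1) (hb : Complex.exp (Complex.I * b) ≠ 1) :
    (Complex.exp (Complex.I * b * m) = 1 → Isum m a b = -m) ∧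
    (Complex.exp (Complex.I * b * m) = -1 →
      Isum m a b = m - 1 +
        ((1 + Complex.exp (Complex.I * b)) / (1 - Complex.exp (Complex.I * b))) ^ 2) :=
  Isum_one_ne_one_general m a b ha hb
end

section
/- For any triple (u,u',u'') ∈ 𝔽^(m) whose 'charge defect' D := (j+j'+j'') - (k+k'+k'') satisfies D ∉ mℤ, the fusion coefficient N_{u,u',u''} = ∑_{v ∈ NS^(m)} S^(m)_{u,v} S^(m)_{u',v} S^(m)_{u'',v} / S^(m)_{(1/2,1/2),v} equals 0. -/
open Complex Finset

/-!
Write `B = j + k` and `C = j - k` for each index. At `v = (t + 1/2, β - t - 1/2) ∈ NS^(m)` the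
summand of `Nfus` is `(2/m)² x^(2t+1-β) Φ(β)`, where `x = exp(iπD/m)` and `Φ` is `sinRatio`.
The sum over `t` is geometric, with value `(x^β - x^(-β)) / (x - x⁻¹)`; this needs `x² ≠ 1`,
which is exactly `D ∉ mℤ`. Under `β ↦ m - β` the factors `x^β - x^(-β)` and `Φ(β)` change by
`-(-1)^D` and `-(-1)^(B + B' + B'')`, whose product is `-1` because
`B + B' + B'' + D = 2(j + j' + j'')` is odd on `𝔽^(m)`. So the sum is its own negative.
-/

open Real

theorem Finset.sum_Ico_one_eq_zero_of_reflect {M : Type*} [AddCommGroup M] [IsAddTorsionFree M]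
    {m : ℕ} {f : ℕ → M} (hf : ∀ β ∈ Ico 1 m, f (m - β) = -f β) : ∑ β ∈ Ico 1 m, f β = 0 := by
  rw [← self_eq_neg, ← sum_neg_distrib]
  calc ∑ β ∈ Ico 1 m, f β = ∑ β ∈ Ico 1 m, f (m - β) := by
        rw [sum_Ico_reflect f 1 (Nat.le_succ m), Nat.add_sub_cancel_left, Nat.add_sub_cancel]
    _ = ∑ β ∈ Ico 1 m, -f β := sum_congr rfl hf

theorem sum_range_zpow_mul_sub_inv {K : Type*} [DivisionRing K] {x : K} (hx : x ≠ 0) (β : ℕ) :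
    (∑ t ∈ range β, x ^ (2 * t + 1 - β : ℤ)) * (x - x⁻¹) = x ^ β - x⁻¹ ^ β := by
  have hstep : ∀ t : ℕ, x ^ (2 * t + 1 - β : ℤ) * (x - x⁻¹)
      = x ^ (2 * ((t + 1 : ℕ) : ℤ) - β) - x ^ (2 * (t : ℤ) - β) := by
    intro t
    rw [mul_sub, ← zpow_add_one₀ hx, ← zpow_sub_one₀ hx]
    push_cast
    ring_nf
  rw [sum_mul, sum_congr rfl fun t _ => hstep t, sum_range_sub fun t : ℕ => x ^ (2 * (t : ℤ) - β),
    two_mul, add_sub_cancel_right, Nat.cast_zero, mul_zero, zero_sub, zpow_neg, zpow_natCast,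
    inv_pow]

theorem sum_Ico_sum_range_zpow_mul_eq_zero {K : Type*} [Field K] [CharZero K] {m : ℕ} {x : K}
    (hx₀ : x ≠ 0) (hx : x ^ 2 ≠ 1) (hxm : x ^ (2 * m) = 1) {Φ : ℕ → K}
    (hΦ : ∀ β ∈ Ico 1 m, Φ (m - β) = x ^ m * Φ β) :
    ∑ β ∈ Ico 1 m, ∑ t ∈ range β, x ^ (2 * t + 1 - β : ℤ) * Φ β = 0 := by
  have hxx : x - x⁻¹ ≠ 0 := by
    rw [sub_ne_zero]
    contrapose! hx
    rw [sq]
    nth_rw 2 [hx]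
    exact mul_inv_cancel₀ hx₀
  have hinv : x⁻¹ ^ m = x ^ m := by
    rw [inv_pow, inv_eq_of_mul_eq_one_right (by rw [← pow_add, ← two_mul, hxm])]
  have hreflect : ∑ β ∈ Ico 1 m, (x ^ β - x⁻¹ ^ β) * Φ β = 0 := by
    refine sum_Ico_one_eq_zero_of_reflect fun β hβ => ?_
    have hβm : β ≤ m := (mem_Ico.mp hβ).2.le
    rw [hΦ β hβ, pow_sub₀ x hx₀ hβm, pow_sub₀ x⁻¹ (inv_ne_zero hx₀) hβm, hinv]
    simp only [inv_pow, inv_inv]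
    linear_combination ((x ^ β)⁻¹ - x ^ β) * Φ β * hxm
  refine (mul_left_inj' hxx).mp ?_
  rw [zero_mul, ← hreflect, sum_mul]
  refine sum_congr rfl fun β _ => ?_
  rw [← sum_mul, mul_right_comm, sum_range_zpow_mul_sub_inv hx₀]

noncomputable def sinRatio (m : ℕ) (a b c x : ℝ) : ℝ :=
  Real.sin (π * a * x / m) * Real.sin (π * b * x / m) * Real.sin (π * c * x / m) /
    Real.sin (π * x / m)

theorem sinRatio_sub (m : ℕ) (a b c : ℤ) (x : ℝ) :
    sinRatio m a b c (m - x) = (-1) ^ (a + b + c + 1) * sinRatio m a b c x := by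
  rcases eq_or_ne m 0 with rfl | hm
  · simp [sinRatio]
  have hsin : ∀ n : ℤ, Real.sin (π * n * (m - x) / m) = -((-1) ^ n * Real.sin (π * n * x / m)) := by
    intro n
    rw [show π * n * (m - x) / m = n * π - π * n * x / m by field_simp, Real.sin_int_mul_pi_sub]
  have hsin₁ : Real.sin (π * (m - x) / m) = Real.sin (π * x / m) := by
    rw [show π * (m - x) / m = π - π * x / m by field_simp, Real.sin_pi_sub]
  simp only [sinRatio, hsin, hsin₁, zpow_add₀ (by norm_num : (-1 : ℝ) ≠ 0), zpow_one]
  ring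

theorem Smat_mul_Smat_mul_Smat_div_Smat_half (m : ℕ) (u u' u'' v : ℝ × ℝ) :
    Smat m u v * Smat m u' v * Smat m u'' v / Smat m (1 / 2, 1 / 2) v =
      (2 / m) ^ 2 * (Complex.exp (π * I *
          (((u.1 + u'.1 + u''.1) - (u.2 + u'.2 + u''.2)) * (v.1 - v.2) / m : ℝ)) *
        sinRatio m (u.1 + u.2) (u'.1 + u'.2) (u''.1 + u''.2) (v.1 + v.2)) := by
  rcases eq_or_ne m 0 with rfl | hm
  · simp [Smat]
  have hexp : Complex.exp (π * I *
        (((u.1 + u'.1 + u''.1) - (u.2 + u'.2 + u''.2)) * (v.1 - v.2) / m : ℝ)) =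
      Complex.exp (π * I * ((u.1 - u.2) * (v.1 - v.2) / m : ℝ)) *
        Complex.exp (π * I * ((u'.1 - u'.2) * (v.1 - v.2) / m : ℝ)) *
        Complex.exp (π * I * ((u''.1 - u''.2) * (v.1 - v.2) / m : ℝ)) := by
    rw [← Complex.exp_add, ← Complex.exp_add]
    congr 1
    push_cast
    ring
  rw [hexp]
  simp only [Smat, sinRatio, sub_self, zero_mul, zero_div, ofReal_zero, mul_zero,
    Complex.exp_zero, mul_one, add_halves, ofReal_div, ofReal_mul, ofReal_sin]
  field_simp

theorem sum_NSfin {M : Type*} [AddCommMonoid M] (m : ℕ) (g : ℝ × ℝ → M) :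
    ∑ v ∈ NSfin m, g v = ∑ β ∈ Ico 1 m, ∑ t ∈ range β, g (t + 1 / 2, β - t - 1 / 2) := by
  rw [NSfin, sum_image, sum_sigma']
  · refine sum_bij' (fun p _ => ⟨p.1 + p.2 + 1, p.1⟩) (fun s _ => (s.2, s.1 - 1 - s.2))
      ?_ ?_ ?_ ?_ ?_ <;> simp only [mem_filter, mem_product, mem_range, mem_sigma, mem_Ico]
    · intro p hp
      omega
    · intro s hs
      omega
    · intro p hp
      exact Prod.ext rfl (by omega)
    · rintro ⟨β, t⟩ h
      simp only [Sigma.mk.injEq, heq_eq_eq, and_true] at h ⊢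
      omega
    · intro p _
      congr 2
      push_cast
      ring
  · intro p _ q _ hpq
    simp only [Prod.mk.injEq, add_left_inj, Nat.cast_inj] at hpq
    exact Prod.ext hpq.1 hpq.2

theorem exp_pi_mul_I_int_div_pow (D : ℤ) {m : ℕ} (hm : m ≠ 0) :
    Complex.exp (π * I * D / m) ^ m = (-1) ^ D := by
  rw [← Complex.exp_nat_mul, mul_div_cancel₀ _ (Nat.cast_ne_zero.mpr hm), mul_comm,
    Complex.exp_int_mul, exp_pi_mul_I]

theorem exp_pi_mul_I_int_div_pow_two_mul (D : ℤ) {m : ℕ} (hm : m ≠ 0) :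
    Complex.exp (π * I * D / m) ^ (2 * m) = 1 := by
  rw [pow_mul', exp_pi_mul_I_int_div_pow D hm, ← zpow_natCast, ← zpow_mul, mul_comm,
    zpow_mul, Nat.cast_ofNat]
  norm_num

theorem exp_pi_mul_I_int_div_sq_ne_one {D : ℤ} {m : ℕ} (hm : m ≠ 0)
    (hD : ¬ ∃ t : ℤ, (D : ℝ) = m * t) : Complex.exp (π * I * D / m) ^ 2 ≠ 1 := by
  rw [← Complex.exp_nat_mul, Ne, Complex.exp_eq_one_iff]
  rintro ⟨t, ht⟩
  rw [Nat.cast_ofNat] at ht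
  field_simp at ht
  exact hD ⟨t, by exact_mod_cast ht⟩

theorem exists_int_of_mem_NSfin {m : ℕ} {u : ℝ × ℝ} (h : u ∈ NSfin m) :
    ∃ B C : ℤ, u.1 + u.2 = B ∧ u.1 - u.2 = C ∧ Odd (B + C) := by
  obtain ⟨p, -, rfl⟩ := mem_image.mp h
  exact ⟨p.1 + p.2 + 1, p.1 - p.2, by push_cast; ring, by push_cast; ring, ⟨p.1, by ring⟩⟩

theorem exists_int_of_mem_Rfin {m : ℕ} {u : ℝ × ℝ} (h : u ∈ Rfin m) :
    ∃ B C : ℤ, u.1 + u.2 = B ∧ u.1 - u.2 = C ∧ Even (B + C) := by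
  obtain ⟨p, -, rfl⟩ := mem_image.mp h
  exact ⟨p.1 + p.2, p.1 - p.2, by push_cast; ring, by push_cast; ring, ⟨p.1, by ring⟩⟩

theorem Fmem.exists_int {m : ℕ} {u u' u'' : ℝ × ℝ} (hF : Fmem m u u' u'') :
    ∃ B₁ B₂ B₃ D : ℤ, u.1 + u.2 = B₁ ∧ u'.1 + u'.2 = B₂ ∧ u''.1 + u''.2 = B₃ ∧
      (u.1 + u'.1 + u''.1) - (u.2 + u'.2 + u''.2) = D ∧ Odd (B₁ + B₂ + B₃ + D) := by
  have of_parity : ∀ {B₁ B₂ B₃ C₁ C₂ C₃ : ℤ}, u.1 + u.2 = B₁ → u.1 - u.2 = C₁ →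
      u'.1 + u'.2 = B₂ → u'.1 - u'.2 = C₂ → u''.1 + u''.2 = B₃ → u''.1 - u''.2 = C₃ →
      Odd (B₁ + C₁ + (B₂ + C₂) + (B₃ + C₃)) →
      ∃ B₁ B₂ B₃ D : ℤ, u.1 + u.2 = B₁ ∧ u'.1 + u'.2 = B₂ ∧ u''.1 + u''.2 = B₃ ∧
        (u.1 + u'.1 + u''.1) - (u.2 + u'.2 + u''.2) = D ∧ Odd (B₁ + B₂ + B₃ + D) := by
    intro B₁ B₂ B₃ C₁ C₂ C₃ e₁ f₁ e₂ f₂ e₃ f₃ hodd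
    refine ⟨B₁, B₂, B₃, C₁ + C₂ + C₃, e₁, e₂, e₃, by push_cast; linarith, ?_⟩
    convert hodd using 1
    ring
  rcases hF with ⟨h₁, h₂, h₃⟩ | ⟨h₁, h₂, h₃⟩ | ⟨h₁, h₂, h₃⟩ | ⟨h₁, h₂, h₃⟩
  · obtain ⟨B₁, C₁, e₁, f₁, p₁⟩ := exists_int_of_mem_NSfin h₁
    obtain ⟨B₂, C₂, e₂, f₂, p₂⟩ := exists_int_of_mem_NSfin h₂
    obtain ⟨B₃, C₃, e₃, f₃, p₃⟩ := exists_int_of_mem_NSfin h₃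
    exact of_parity e₁ f₁ e₂ f₂ e₃ f₃ ((p₁.add_odd p₂).add_odd p₃)
  · obtain ⟨B₁, C₁, e₁, f₁, p₁⟩ := exists_int_of_mem_NSfin h₁
    obtain ⟨B₂, C₂, e₂, f₂, p₂⟩ := exists_int_of_mem_Rfin h₂
    obtain ⟨B₃, C₃, e₃, f₃, p₃⟩ := exists_int_of_mem_Rfin h₃
    exact of_parity e₁ f₁ e₂ f₂ e₃ f₃ ((p₁.add_even p₂).add_even p₃)
  · obtain ⟨B₁, C₁, e₁, f₁, p₁⟩ := exists_int_of_mem_Rfin h₁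
    obtain ⟨B₂, C₂, e₂, f₂, p₂⟩ := exists_int_of_mem_NSfin h₂
    obtain ⟨B₃, C₃, e₃, f₃, p₃⟩ := exists_int_of_mem_Rfin h₃
    exact of_parity e₁ f₁ e₂ f₂ e₃ f₃ ((p₁.add_odd p₂).add_even p₃)
  · obtain ⟨B₁, C₁, e₁, f₁, p₁⟩ := exists_int_of_mem_Rfin h₁
    obtain ⟨B₂, C₂, e₂, f₂, p₂⟩ := exists_int_of_mem_Rfin h₂
    obtain ⟨B₃, C₃, e₃, f₃, p₃⟩ := exists_int_of_mem_NSfin h₃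
    exact of_parity e₁ f₁ e₂ f₂ e₃ f₃ ((p₁.add p₂).add_odd p₃)

theorem Nfus_eq_zero_of_charge_defect (m : ℕ) (hm : 0 < m) (u u' u'' : ℝ × ℝ)
    (hF : Fmem m u u' u'')
    (hD : ¬ ∃ t : ℤ, (u.1 + u'.1 + u''.1) - (u.2 + u'.2 + u''.2) = (m : ℝ) * t) :
    Nfus m u u' u'' = 0 := by
  obtain ⟨B₁, B₂, B₃, D, e₁, e₂, e₃, eD, hodd⟩ := hF.exists_int
  set x := Complex.exp (π * I * D / m) with hx
  have hsign : (-1 : ℝ) ^ (B₁ + B₂ + B₃ + 1) = (-1) ^ D := by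
    simp only [neg_one_zpow_eq_ite, Int.even_add_one, Int.not_even_iff_odd, Int.odd_add.mp hodd]
  have hNfus : Nfus m u u' u'' = (2 / m) ^ 2 *
      ∑ β ∈ Ico 1 m, ∑ t ∈ range β, x ^ (2 * t + 1 - β : ℤ) * (sinRatio m B₁ B₂ B₃ β : ℂ) := by
    simp only [Nfus, sum_NSfin, Smat_mul_Smat_mul_Smat_div_Smat_half, e₁, e₂, e₃, eD, mul_sum]
    refine sum_congr rfl fun β _ => sum_congr rfl fun t _ => ?_
    rw [show (t : ℝ) + 1 / 2 + (β - t - 1 / 2) = β by ring, hx, ← Complex.exp_int_mul]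
    congr 3
    push_cast
    ring
  rw [hNfus, sum_Ico_sum_range_zpow_mul_eq_zero (Complex.exp_ne_zero _)
    (exp_pi_mul_I_int_div_sq_ne_one hm.ne' (eD ▸ hD)) (exp_pi_mul_I_int_div_pow_two_mul D hm.ne'),
    mul_zero]
  intro β hβ
  rw [Nat.cast_sub (mem_Ico.mp hβ).2.le, sinRatio_sub, exp_pi_mul_I_int_div_pow D hm.ne', hsign]
  push_cast
  rfl
end
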